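/- arXiv:2209.05937 — 5 statements merged into one kernel-verified Lean document; each statement's English description precedes it below -/
import Mathlib

section
/- Let n be a natural number and let B, C, Z, Ȳ, D, E, F, G, A, S, R : ℝ → M_{2n}(ℝ) be differentiable matrix-valued functions satisfying the two matrix Riccati-type systems S′ = B·Ȳ·S + D + S·A·F and R′ = −R·C·Z + E + G·A·R, together with the compatibility condition S·A′·R + D·A·R + S·A·E + S·(A·(F+G)·A)·R = 0 (identically in τ). Then T := S·A·R satisfies the linear matrix equation T′(τ) + T(τ)·C(τ)·Z(τ) = B(τ)·Ȳ(τ)·T(τ) for all τ. -/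
open Matrix

/-- Entrywise derivative of a matrix-valued function of a real variable. -/
noncomputable def mderiv {m k : Type*} (M : ℝ → Matrix m k ℝ) (τ : ℝ) : Matrix m k ℝ :=
  Matrix.of fun i j => deriv (fun s => M s i j) τ

lemma mderiv_mul {m k l : Type*} [Fintype k]
    (M : ℝ → Matrix m k ℝ) (N : ℝ → Matrix k l ℝ)
    (hM : ∀ i j, Differentiable ℝ fun τ => M τ i j)
    (hN : ∀ i j, Differentiable ℝ fun τ => N τ i j) (τ : ℝ) :
    mderiv (fun s => M s * N s) τ = mderiv M τ * N τ + M τ * mderiv N τ := by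
  ext i j
  simp only [mderiv, Matrix.of_apply, Matrix.mul_apply, Matrix.add_apply]
  rw [deriv_fun_sum (fun x _ => ((hM i x).fun_mul (hN x j)).differentiableAt)]
  rw [← Finset.sum_add_distrib]
  congr 1; ext x
  rw [deriv_fun_mul ((hM i x).differentiableAt) ((hN x j).differentiableAt)]

lemma mul_entry_diff {m k l : Type*} [Fintype k]
    (M : ℝ → Matrix m k ℝ) (N : ℝ → Matrix k l ℝ)
    (hM : ∀ i j, Differentiable ℝ fun τ => M τ i j)
    (hN : ∀ i j, Differentiable ℝ fun τ => N τ i j) :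
    ∀ i j, Differentiable ℝ fun τ => (M τ * N τ) i j := by
  intro i j
  simp only [Matrix.mul_apply]
  exact Differentiable.fun_sum fun x _ => (hM i x).mul (hN x j)

theorem riccati_systems_and_compatibility_give_mapping_equation
    (n : ℕ) (B C Z Ybar D E F G A S R : ℝ → Matrix (Fin (2 * n)) (Fin (2 * n)) ℝ)
    (hBd : ∀ i j, Differentiable ℝ fun τ => B τ i j)
    (hCd : ∀ i j, Differentiable ℝ fun τ => C τ i j)
    (hZd : ∀ i j, Differentiable ℝ fun τ => Z τ i j)
    (hYd : ∀ i j, Differentiable ℝ fun τ => Ybar τ i j)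
    (hDd : ∀ i j, Differentiable ℝ fun τ => D τ i j)
    (hEd : ∀ i j, Differentiable ℝ fun τ => E τ i j)
    (hFd : ∀ i j, Differentiable ℝ fun τ => F τ i j)
    (hGd : ∀ i j, Differentiable ℝ fun τ => G τ i j)
    (hAd : ∀ i j, Differentiable ℝ fun τ => A τ i j)
    (hSd : ∀ i j, Differentiable ℝ fun τ => S τ i j)
    (hRd : ∀ i j, Differentiable ℝ fun τ => R τ i j)
    (hS : ∀ τ, mderiv S τ = B τ * Ybar τ * S τ + D τ + S τ * A τ * F τ)
    (hR : ∀ τ, mderiv R τ = -(R τ * C τ * Z τ) + E τ + G τ * A τ * R τ)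
    (hcompat : ∀ τ, S τ * mderiv A τ * R τ + D τ * A τ * R τ + S τ * A τ * E τ +
        S τ * (A τ * (F τ + G τ) * A τ) * R τ = 0)
    (T : ℝ → Matrix (Fin (2 * n)) (Fin (2 * n)) ℝ)
    (hT : ∀ τ, T τ = S τ * A τ * R τ) :
    ∀ τ, mderiv T τ + T τ * C τ * Z τ = B τ * Ybar τ * T τ := by
  intro τ
  have hTfun : T = fun s => S s * A s * R s := funext hT
  have hSAd := mul_entry_diff S A hSd hAd
  have h1 : mderiv T τ = (mderiv S τ * A τ + S τ * mderiv A τ) * R τ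
      + S τ * A τ * mderiv R τ := by
    rw [hTfun, mderiv_mul (fun s => S s * A s) R hSAd hRd,
      mderiv_mul S A hSd hAd]
  rw [h1, hT τ, hS τ, hR τ]
  have key := hcompat τ
  have e : ((B τ * Ybar τ * S τ + D τ + S τ * A τ * F τ) * A τ + S τ * mderiv A τ) * R τ
      + S τ * A τ * (-(R τ * C τ * Z τ) + E τ + G τ * A τ * R τ)
      + S τ * A τ * R τ * C τ * Z τ
      = B τ * Ybar τ * (S τ * A τ * R τ)
      + (S τ * mderiv A τ * R τ + D τ * A τ * R τ + S τ * A τ * E τ +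
        S τ * (A τ * (F τ + G τ) * A τ) * R τ) := by noncomm_ring
  rw [e, key, add_zero]
end

section
/- Let n be a natural number; let M, N, C, K : ℝ → M_{2n}(ℝ) be matrix-valued functions, g, e : ℝ → ℝ^{2n} vector-valued functions, and t : ℝ → ℝ a differentiable function. Suppose ξ : ℝ → ℝ^{2n} is differentiable with ξ′(τ) = C(τ) *ᵥ (M(τ) *ᵥ ξ(τ) + g(τ)) for all τ (Hamilton-type equations for the generalized quadratic Hamiltonian H = ½ξᵀMξ + gᵀξ + d), that T : ℝ → M_{2n}(ℝ) is differentiable with T′(τ) + T(τ)·C(τ)·M(τ) = t′(τ)·K(τ)·N(τ)·T(τ), and that r : ℝ → ℝ^{2n} is differentiable with r′(τ) = t′(τ)·(K(τ) *ᵥ (N(τ) *ᵥ r(τ) + e(τ))) − T(τ)·C(τ) *ᵥ g(τ). Then the affine transform η(τ) := T(τ) *ᵥ ξ(τ) + r(τ) satisfies η′(τ) = t′(τ)·(K(τ) *ᵥ (N(τ) *ᵥ η(τ) + e(τ))) for all τ. -/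
open Matrix

/-- Componentwise derivative of a vector-valued function of a real variable. -/
noncomputable def vderiv {m : Type*} (v : ℝ → m → ℝ) (τ : ℝ) : m → ℝ :=
  fun i => deriv (fun s => v s i) τ

theorem affine_mapped_trajectory_satisfies_generalized_quadratic_equations
    (n : ℕ) (M N C K : ℝ → Matrix (Fin (2 * n)) (Fin (2 * n)) ℝ)
    (g e : ℝ → Fin (2 * n) → ℝ) (t : ℝ → ℝ) (ht : Differentiable ℝ t)
    (ξ : ℝ → Fin (2 * n) → ℝ)
    (hξd : ∀ i, Differentiable ℝ fun τ => ξ τ i)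
    (hξ : ∀ τ, vderiv ξ τ = C τ *ᵥ (M τ *ᵥ ξ τ + g τ))
    (T : ℝ → Matrix (Fin (2 * n)) (Fin (2 * n)) ℝ)
    (hTd : ∀ i j, Differentiable ℝ fun τ => T τ i j)
    (hT : ∀ τ, mderiv T τ + T τ * C τ * M τ = deriv t τ • (K τ * N τ * T τ))
    (r : ℝ → Fin (2 * n) → ℝ)
    (hrd : ∀ i, Differentiable ℝ fun τ => r τ i)
    (hr : ∀ τ, vderiv r τ =
      deriv t τ • (K τ *ᵥ (N τ *ᵥ r τ + e τ)) - (T τ * C τ) *ᵥ g τ)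
    (η : ℝ → Fin (2 * n) → ℝ) (hη : ∀ τ, η τ = T τ *ᵥ ξ τ + r τ) :
    ∀ τ, vderiv η τ = deriv t τ • (K τ *ᵥ (N τ *ᵥ η τ + e τ)) := by
  intro τ
  have key : vderiv η τ = mderiv T τ *ᵥ ξ τ + T τ *ᵥ vderiv ξ τ + vderiv r τ := by
    funext i
    have h1 : (fun s => η s i) = fun s => (∑ j, T s i j * ξ s j) + r s i := by
      funext s; simp [hη s, mulVec, dotProduct]
    simp only [vderiv, h1]
    rw [deriv_fun_add (by
      exact DifferentiableAt.fun_sum fun j _ => ((hTd i j).differentiableAt).mul ((hξd j).differentiableAt))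
      ((hrd i).differentiableAt)]
    rw [deriv_fun_sum (fun j _ => ((hTd i j).differentiableAt).fun_mul ((hξd j).differentiableAt))]
    have hm : ∀ j, deriv (fun s => T s i j * ξ s j) τ
        = deriv (fun s => T s i j) τ * ξ τ j + T τ i j * deriv (fun s => ξ s j) τ :=
      fun j => deriv_fun_mul ((hTd i j).differentiableAt) ((hξd j).differentiableAt)
    simp only [hm]
    simp [mderiv, vderiv, mulVec, dotProduct, Finset.sum_add_distrib]
  have hTτ : mderiv T τ = deriv t τ • (K τ * N τ * T τ) - T τ * C τ * M τ :=
    eq_sub_of_add_eq (hT τ)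
  rw [key, hTτ, hξ τ, hr τ, hη τ]
  simp only [Matrix.sub_mulVec, Matrix.smul_mulVec, Matrix.mulVec_add,
    Matrix.mulVec_mulVec, Matrix.mulVec_smul, smul_add, mul_assoc]
  abel
end

section
/- Let u : ℝⁿ → ℝ be four times continuously differentiable, let G_{jk}(x) := ∂_j∂_k u(x) be its Hessian metric, let x ∈ ℝⁿ be a point at which the matrix G(x) is invertible with inverse entries G^{lm}(x), and set Γ_{ijk}(x) := ½ ∂_i∂_j∂_k u(x). Define the lowered Riemann curvature tensor of G at x by the standard coordinate expression R_{hijk}(x) := ½(∂_i∂_j G_{hk} + ∂_h∂_k G_{ij} − ∂_i∂_k G_{hj} − ∂_h∂_j G_{ik})(x) + Σ_{l,m} G^{lm}(x)(Γ_{ijm}(x)Γ_{hkl}(x) − Γ_{ikm}(x)Γ_{hjl}(x)). Then for all indices h, i, j, k: R_{hijk}(x) = Σ_{l,m} G^{lm}(x)(Γ_{ijm}(x)Γ_{hkl}(x) − Γ_{ikm}(x)Γ_{hjl}(x)), i.e. the curvature of a Hessian metric is given purely by the quadratic Christoffel term. -/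
open Matrix

/-- Partial derivative of `f` in the `i`-th coordinate direction. -/
noncomputable def pd {n : ℕ} (i : Fin n) (f : (Fin n → ℝ) → ℝ) : (Fin n → ℝ) → ℝ :=
  fun x => fderiv ℝ f x (Pi.single i 1)

lemma pd_contDiff {n : ℕ} {f : (Fin n → ℝ) → ℝ} {m : ℕ∞} (hf : ContDiff ℝ (m + 1) f)
    (i : Fin n) : ContDiff ℝ m (pd i f) := by
  exact (ContinuousLinearMap.apply ℝ ℝ (Pi.single i 1)).contDiff.comp
    (hf.fderiv_right le_rfl)

lemma pd_eq_snd {n : ℕ} {f : (Fin n → ℝ) → ℝ} (hf : ContDiff ℝ 2 f) (a b : Fin n)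
    (x : Fin n → ℝ) :
    pd a (pd b f) x = fderiv ℝ (fderiv ℝ f) x (Pi.single a 1) (Pi.single b 1) := by
  have hdf : ContDiff ℝ 1 (fderiv ℝ f) := hf.fderiv_right (by norm_num)
  have : pd b f = (ContinuousLinearMap.apply ℝ ℝ (Pi.single b 1)) ∘ (fderiv ℝ f) := rfl
  rw [pd, this, fderiv_comp x (ContinuousLinearMap.apply ℝ ℝ (Pi.single b 1)).differentiableAt
    (hdf.differentiable (by norm_num) x)]
  simp

lemma pd_comm {n : ℕ} {f : (Fin n → ℝ) → ℝ} (hf : ContDiff ℝ 2 f) (a b : Fin n) :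
    pd a (pd b f) = pd b (pd a f) := by
  funext x
  rw [pd_eq_snd hf, pd_eq_snd hf]
  have hdf : Differentiable ℝ (fderiv ℝ f) :=
    (hf.fderiv_right (m := 1) (by norm_num)).differentiable (by norm_num)
  exact second_derivative_symmetric
    (fun y => ((hf.differentiable (by norm_num)) y).hasFDerivAt)
    (hdf x).hasFDerivAt _ _

theorem curvature_of_hessian_metric_is_purely_quadratic_christoffel_term
    (n : ℕ) (u : (Fin n → ℝ) → ℝ) (hu : ContDiff ℝ 4 u)
    (G : Fin n → Fin n → (Fin n → ℝ) → ℝ)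
    (hG : ∀ j k, G j k = pd j (pd k u))
    (x : Fin n → ℝ)
    (Gmat : Matrix (Fin n) (Fin n) ℝ)
    (hGmat : Gmat = Matrix.of fun j k => G j k x)
    (hinv : IsUnit Gmat)
    (Ginv : Matrix (Fin n) (Fin n) ℝ) (hGinv : Ginv = Gmat⁻¹)
    (Γ : Fin n → Fin n → Fin n → ℝ)
    (hΓ : ∀ i j k, Γ i j k = (1 / 2) * pd i (pd j (pd k u)) x)
    (Riem : Fin n → Fin n → Fin n → Fin n → ℝ)
    (hRiem : ∀ h i j k, Riem h i j k =
      (1 / 2) * (pd i (pd j (G h k)) x + pd h (pd k (G i j)) x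
        - pd i (pd k (G h j)) x - pd h (pd j (G i k)) x)
      + ∑ l, ∑ m, Ginv l m * (Γ i j m * Γ h k l - Γ i k m * Γ h j l)) :
    ∀ h i j k, Riem h i j k =
      ∑ l, ∑ m, Ginv l m * (Γ i j m * Γ h k l - Γ i k m * Γ h j l) := by
  -- smoothness of iterated partial derivatives of u
  have h3 : ∀ a : Fin n, ContDiff ℝ 3 (pd a u) := fun a =>
    pd_contDiff (by exact_mod_cast hu) a
  have h2 : ∀ a b : Fin n, ContDiff ℝ 2 (pd a (pd b u)) := fun a b =>
    pd_contDiff (by exact_mod_cast h3 b) a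
  -- full symmetry: swapping adjacent indices
  have s34 : ∀ a b : Fin n, pd a (pd b u) = pd b (pd a u) := fun a b =>
    pd_comm (by exact_mod_cast hu.of_le (by norm_num)) a b
  have s23 : ∀ a b c : Fin n, pd a (pd b (pd c u)) = pd b (pd a (pd c u)) := fun a b c =>
    pd_comm (by exact_mod_cast (h3 c).of_le (by norm_num)) a b
  have s12 : ∀ a b c d : Fin n,
      pd a (pd b (pd c (pd d u))) = pd b (pd a (pd c (pd d u))) := fun a b c d =>
    pd_comm (h2 c d) a b
  -- derived swaps
  have key : ∀ a b c d : Fin n,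
      pd a (pd b (pd c (pd d u))) = pd a (pd c (pd d (pd b u))) := by
    intro a b c d
    congr 1
    rw [s23 b c d, s34 b d]
  intro h i j k
  rw [hRiem]
  have e1 : pd i (pd j (G h k)) x = pd i (pd k (G h j)) x := by
    rw [hG, hG]
    rw [key i j h k, key i k h j, s34 k j]
  have e2 : pd h (pd k (G i j)) x = pd h (pd j (G i k)) x := by
    rw [hG, hG]
    rw [key h k i j, key h j i k, s34 j k]
  rw [e1, e2]
  ring
end

section
/- Let η ∈ M_n(ℝ) be a diagonal matrix whose diagonal entries η_A are each 1 or −1, and let z : ℝ → ℝⁿ and σ : ℝ → ℝ be differentiable. Set q(τ) := Σ_A η_A (z^A(τ))² and define y : ℝ → ℝ^{n+2} by y^A(τ) := exp(σ(τ))·z^A(τ) for A = 1,…,n, y^{n+1}(τ) := exp(σ(τ))·(q(τ) − ¼), and y^{n+2}(τ) := exp(σ(τ))·(q(τ) + ¼). Then for every τ the flat line element of the extended metric with signature (η, +1, −1) pulled back along y equals the conformally flat line element: Σ_A η_A ((y^A)′(τ))² + ((y^{n+1})′(τ))² − ((y^{n+2})′(τ))² = exp(2σ(τ)) · Σ_A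 η_A ((z^A)′(τ))². -/
theorem flat_line_element_of_embedding_equals_conformally_flat_line_element
    (n : ℕ) (d : Fin n → ℝ) (hd : ∀ A, d A = 1 ∨ d A = -1)
    (z : ℝ → Fin n → ℝ) (hzd : ∀ A, Differentiable ℝ fun τ => z τ A)
    (σ : ℝ → ℝ) (hσd : Differentiable ℝ σ)
    (q : ℝ → ℝ) (hq : ∀ τ, q τ = ∑ A, d A * (z τ A) ^ 2)
    (y : ℝ → Fin n → ℝ) (hy : ∀ τ A, y τ A = Real.exp (σ τ) * z τ A)
    (y₁ y₂ : ℝ → ℝ)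
    (hy₁ : ∀ τ, y₁ τ = Real.exp (σ τ) * (q τ - 1 / 4))
    (hy₂ : ∀ τ, y₂ τ = Real.exp (σ τ) * (q τ + 1 / 4)) :
    ∀ τ, (∑ A, d A * (deriv (fun s => y s A) τ) ^ 2)
        + (deriv y₁ τ) ^ 2 - (deriv y₂ τ) ^ 2 =
      Real.exp (2 * σ τ) * ∑ A, d A * (deriv (fun s => z s A) τ) ^ 2 := by
  intro τ
  set E := Real.exp (σ τ) with hE
  set S := deriv σ τ with hS
  set Z : Fin n → ℝ := fun A => z τ A with hZ
  set Z' : Fin n → ℝ := fun A => deriv (fun s => z s A) τ with hZ'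
  have hσ : HasDerivAt σ S τ := (hσd τ).hasDerivAt
  have hz : ∀ A, HasDerivAt (fun s => z s A) (Z' A) τ :=
    fun A => ((hzd A) τ).hasDerivAt
  have hqd : HasDerivAt q (∑ A, d A * (2 * Z A * Z' A)) τ := by
    have : HasDerivAt (fun s => ∑ A, d A * (z s A) ^ 2)
        (∑ A, d A * (2 * Z A * Z' A)) τ := by
      apply HasDerivAt.fun_sum
      intro A _
      have := ((hz A).pow 2).const_mul (d A)
      simpa [mul_comm, mul_assoc, mul_left_comm] using this
    exact this.congr_of_eventuallyEq (Filter.Eventually.of_forall fun s => (hq s))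
  set Q' : ℝ := ∑ A, d A * (2 * Z A * Z' A) with hQ'
  have hyA : ∀ A, deriv (fun s => y s A) τ = E * S * Z A + E * Z' A := by
    intro A
    have h : HasDerivAt (fun s => Real.exp (σ s) * z s A)
        (Real.exp (σ τ) * S * Z A + Real.exp (σ τ) * Z' A) τ := by
      have := (hσ.exp).mul (hz A)
      simpa [Pi.mul_def, mul_comm, mul_assoc, mul_left_comm] using this
    have h2 : deriv (fun s => y s A) τ = deriv (fun s => Real.exp (σ s) * z s A) τ := by
      congr 1; funext s; exact hy s A
    rw [h2, h.deriv]
  have hd1 : deriv y₁ τ = E * S * (q τ - 1 / 4) + E * Q' := by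
    have h : HasDerivAt (fun s => Real.exp (σ s) * (q s - 1 / 4))
        (Real.exp (σ τ) * S * (q τ - 1 / 4) + Real.exp (σ τ) * Q') τ := by
      have := (hσ.exp).mul (hqd.sub_const (1 / 4))
      simpa [Pi.mul_def, mul_comm, mul_assoc, mul_left_comm] using this
    have h2 : deriv y₁ τ = deriv (fun s => Real.exp (σ s) * (q s - 1 / 4)) τ := by
      congr 1; funext s; exact hy₁ s
    rw [h2, h.deriv]
  have hd2 : deriv y₂ τ = E * S * (q τ + 1 / 4) + E * Q' := by
    have h : HasDerivAt (fun s => Real.exp (σ s) * (q s + 1 / 4))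
        (Real.exp (σ τ) * S * (q τ + 1 / 4) + Real.exp (σ τ) * Q') τ := by
      have := (hσ.exp).mul (hqd.add_const (1 / 4))
      simpa [Pi.mul_def, mul_comm, mul_assoc, mul_left_comm] using this
    have h2 : deriv y₂ τ = deriv (fun s => Real.exp (σ s) * (q s + 1 / 4)) τ := by
      congr 1; funext s; exact hy₂ s
    rw [h2, h.deriv]
  have hE2 : Real.exp (2 * σ τ) = E ^ 2 := by
    rw [two_mul, Real.exp_add, hE, sq]
  have expand : ∑ A, d A * (deriv (fun s => y s A) τ) ^ 2
      = E ^ 2 * S ^ 2 * q τ + E ^ 2 * S * Q' + E ^ 2 * ∑ A, d A * (Z' A) ^ 2 := by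
    simp only [hyA]
    rw [hq τ, hQ']
    simp only [Finset.mul_sum, ← Finset.sum_add_distrib]
    exact Finset.sum_congr rfl fun A _ => by simp only [hZ]; ring
  rw [expand, hd1, hd2, hE2]
  ring
end

section
/- Let n be a natural number, let Y₄, Z₄, C ∈ M_n(ℝ) be constant matrices, and let t : ℝ → ℝ be differentiable. Define the 2n×2n block matrices Y := fromBlocks 0 0 0 Y₄, Z := fromBlocks 0 0 0 Z₄, and T(τ) := fromBlocks (t(τ)·Y₄·C) (−t(τ)·τ·Y₄·C·Z₄) C (−τ·C·Z₄). Then T solves the mapping equation T′(τ) + T(τ)·J·Z = t′(τ)·J·Y·T(τ) for all τ; equivalently, T₃ = C is constant, T₁ = t·Y₄·T₃, T₂ = −t·τ·Y₄·T₃·Z₄ and T₄ = −τ·T₃·Z₄ satisfy T₁′ = t′·Y₄·T₃, T₂′ = t′·Y₄·T₄ − T₁·Z₄, T₃′ = 0 and T₄′ = −T₃·Z₄. -/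
open Matrix

/-- The standard 2n×2n symplectic matrix J = [[0, I], [-I, 0]]. -/
def Jmat (n : ℕ) : Matrix (Fin n ⊕ Fin n) (Fin n ⊕ Fin n) ℝ :=
  Matrix.fromBlocks 0 1 (-1) 0

lemma mderiv_smul_const {m k : Type*} (f : ℝ → ℝ) (A : Matrix m k ℝ) (τ : ℝ)
    (hf : DifferentiableAt ℝ f τ) :
    mderiv (fun s => f s • A) τ = deriv f τ • A := by
  ext i j
  simp only [mderiv, Matrix.of_apply, Matrix.smul_apply, smul_eq_mul]
  exact deriv_mul_const hf _

lemma mderiv_neg {m k : Type*} (M : ℝ → Matrix m k ℝ) (τ : ℝ) :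
    mderiv (fun s => -(M s)) τ = -(mderiv M τ) := by
  ext i j
  simp only [mderiv, Matrix.of_apply, Matrix.neg_apply]
  exact deriv.neg

lemma mderiv_fromBlocks {p q r s : Type*} (A : ℝ → Matrix p r ℝ) (B : ℝ → Matrix p s ℝ)
    (C : ℝ → Matrix q r ℝ) (D : ℝ → Matrix q s ℝ) (τ : ℝ) :
    mderiv (fun u => Matrix.fromBlocks (A u) (B u) (C u) (D u)) τ =
      Matrix.fromBlocks (mderiv A τ) (mderiv B τ) (mderiv C τ) (mderiv D τ) := by
  ext i j
  rcases i with i | i <;> rcases j with j | j <;>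
    simp [mderiv, Matrix.fromBlocks]

theorem explicit_T_solves_mapping_equation
    (n : ℕ) (Y₄ Z₄ C : Matrix (Fin n) (Fin n) ℝ)
    (t : ℝ → ℝ) (ht : Differentiable ℝ t)
    (Y Z : Matrix (Fin n ⊕ Fin n) (Fin n ⊕ Fin n) ℝ)
    (hY : Y = Matrix.fromBlocks 0 0 0 Y₄)
    (hZ : Z = Matrix.fromBlocks 0 0 0 Z₄)
    (T : ℝ → Matrix (Fin n ⊕ Fin n) (Fin n ⊕ Fin n) ℝ)
    (hT : ∀ τ, T τ = Matrix.fromBlocks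
      (t τ • (Y₄ * C)) (-((t τ * τ) • (Y₄ * C * Z₄))) C (-(τ • (C * Z₄)))) :
    (∀ τ, mderiv T τ + T τ * Jmat n * Z = deriv t τ • (Jmat n * Y * T τ)) ∧
    (∀ τ,
      mderiv (fun s => t s • (Y₄ * C)) τ = deriv t τ • (Y₄ * C) ∧
      mderiv (fun s => -((t s * s) • (Y₄ * C * Z₄))) τ =
        deriv t τ • (Y₄ * (-(τ • (C * Z₄)))) - (t τ • (Y₄ * C)) * Z₄ ∧
      mderiv (fun _ : ℝ => C) τ = 0 ∧
      mderiv (fun s => -(s • (C * Z₄))) τ = -(C * Z₄)) := by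
  have hTfun : T = fun s => Matrix.fromBlocks
      (t s • (Y₄ * C)) (-((t s * s) • (Y₄ * C * Z₄))) C (-(s • (C * Z₄))) := funext hT
  have h1 : ∀ τ, mderiv (fun s => t s • (Y₄ * C)) τ = deriv t τ • (Y₄ * C) :=
    fun τ => mderiv_smul_const t _ τ (ht τ)
  have h2 : ∀ τ, mderiv (fun s => -((t s * s) • (Y₄ * C * Z₄))) τ =
      -((deriv t τ * τ + t τ) • (Y₄ * C * Z₄)) := by
    intro τ
    rw [mderiv_neg, mderiv_smul_const (fun s => t s * s) _ τ ((ht τ).mul differentiableAt_fun_id),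
      deriv_fun_mul (ht τ) differentiableAt_fun_id]
    simp
  have h3 : ∀ τ : ℝ, mderiv (fun _ : ℝ => C) τ = 0 := by
    intro τ; ext i j; simp [mderiv]
  have h4 : ∀ τ, mderiv (fun s => -(s • (C * Z₄))) τ = -(C * Z₄) := by
    intro τ
    rw [mderiv_neg, mderiv_smul_const (fun s => s) _ τ differentiableAt_fun_id]
    simp
  constructor
  · intro τ
    subst hTfun hY hZ
    rw [mderiv_fromBlocks, h1, h2, h3, h4]
    simp only [Jmat, Matrix.fromBlocks_multiply, Matrix.fromBlocks_add,
      Matrix.fromBlocks_smul]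
    rw [Matrix.fromBlocks_inj]
    refine ⟨?_, ?_, ?_, ?_⟩ <;>
      simp only [Matrix.mul_zero, Matrix.zero_mul, Matrix.mul_one, Matrix.one_mul,
        Matrix.mul_neg, Matrix.neg_mul, Matrix.smul_mul, Matrix.mul_smul,
        add_zero, zero_add, Matrix.mul_assoc] <;>
      module
  · intro τ
    refine ⟨h1 τ, ?_, h3 τ, h4 τ⟩
    rw [h2]
    simp only [Matrix.mul_neg, Matrix.mul_smul, Matrix.smul_mul, Matrix.mul_assoc]
    module
end
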